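/- arXiv:1808.03992 — 5 statements merged into one kernel-verified Lean document; each statement's English description precedes it below -/
import Mathlib

section
/- Let {U_1, …, U_n} be a d-convex union representation of a simplicial complex Δ, and let H ⊆ ℝ^d be a closed or open halfspace. Then Δ collapses onto the nerve of the collection {U_1 ∩ H, …, U_n ∩ H}. -/
open Set

/-- An abstract simplicial complex on ground set `V`: a collection of finite
subsets of `V` that is closed under inclusion. -/
def IsSimplicialComplex {V : Type*} (Δ : Set (Finset V)) : Prop :=
  ∀ σ ∈ Δ, ∀ τ : Finset V, τ ⊆ σ → τ ∈ Δ

/-- The nerve of a collection of sets `U i`: the faces are the finite sets `σ`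
of indices such that `⋂ i ∈ σ, U i ≠ ∅`, where by convention the empty face
belongs to the nerve iff some `U i` is nonempty. -/
def nerveOf {V E : Type*} (U : V → Set E) : Set (Finset V) :=
  {σ | (∃ i, (U i).Nonempty) ∧ ∃ x, ∀ i ∈ σ, x ∈ U i}

/-- A facet of `Δ` is an inclusion-maximal face. -/
def IsFacet {V : Type*} (Δ : Set (Finset V)) (σ : Finset V) : Prop :=
  σ ∈ Δ ∧ ∀ τ ∈ Δ, σ ⊆ τ → τ = σ

/-- A free face of `Δ`: a face that is not a facet and is contained in a
unique facet. -/
def IsFreeFace {V : Type*} (Δ : Set (Finset V)) (σ : Finset V) : Prop :=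
  σ ∈ Δ ∧ ¬ IsFacet Δ σ ∧ ∃! τ : Finset V, IsFacet Δ τ ∧ σ ⊆ τ

/-- An elementary collapse removes from `Δ` all faces containing a free face. -/
def ElemCollapse {V : Type*} (Δ Γ : Set (Finset V)) : Prop :=
  ∃ σ : Finset V, IsFreeFace Δ σ ∧ Γ = {τ ∈ Δ | ¬ σ ⊆ τ}

/-- `Δ` collapses onto `Γ` if a (finite) sequence of elementary collapses
leads from `Δ` to `Γ`. -/
def CollapsesTo {V : Type*} (Δ Γ : Set (Finset V)) : Prop :=
  Relation.ReflTransGen ElemCollapse Δ Γ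

/-- `Δ` is collapsible if it collapses onto the void complex. -/
def Collapsible {V : Type*} (Δ : Set (Finset V)) : Prop :=
  CollapsesTo Δ (∅ : Set (Finset V))

/-- Euclidean space `ℝ^d`. -/
abbrev Euc (d : ℕ) : Type := EuclideanSpace ℝ (Fin d)

/-- `U` is a `d`-convex union representation of `Δ`: the `U i` are convex open
sets in `ℝ^d`, their union is convex, and their nerve is `Δ`. -/
def IsCURep {V : Type*} {d : ℕ} (U : V → Set (Euc d)) (Δ : Set (Finset V)) : Prop :=
  (∀ i, Convex ℝ (U i)) ∧ (∀ i, IsOpen (U i)) ∧ Convex ℝ (⋃ i, U i) ∧ nerveOf U = Δ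

/-- `Δ` is `d`-convex union representable. -/
def IsCUR {V : Type*} (d : ℕ) (Δ : Set (Finset V)) : Prop :=
  ∃ U : V → Set (Euc d), IsCURep U Δ

/-- `Δ` is convex union representable: `d`-convex union representable for some `d`. -/
def ConvexUnionRepresentable {V : Type*} (Δ : Set (Finset V)) : Prop :=
  ∃ d : ℕ, IsCUR d Δ

/-- `Δ` is `d`-representable: the nerve of a family of convex sets in `ℝ^d`. -/
def IsRep {V : Type*} (d : ℕ) (Δ : Set (Finset V)) : Prop :=
  ∃ U : V → Set (Euc d), (∀ i, Convex ℝ (U i)) ∧ nerveOf U = Δ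

/-- `H` is a closed or open halfspace of `ℝ^d`. -/
def IsHalfspace {d : ℕ} (H : Set (Euc d)) : Prop :=
  ∃ (f : Euc d →ₗ[ℝ] ℝ) (c : ℝ), f ≠ 0 ∧ (H = {x | f x < c} ∨ H = {x | f x ≤ c})

/-! Shrink the open sets `U i` to compact convex sets `K i` with the same nerves, before and after
cutting with `H = f ⁻¹' L`, whose union is convex and has a positive Lebesgue number `r`. To a
face `γ` attach the point `P γ` of its region minimising `(f, ‖·‖²)` lexicographically; it is
unique by strict convexity. If the region of `γ` misses `H`, pair `γ` with `γ ∆ {v}`, where `K v`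
contains the `r`-neighbourhood of `P γ` in the union: on a convex set a local lexicographic
minimum is global, so the partner has the same point `P`. Along inclusions `P` can only increase,
so this matching is acyclic, and removing its pairs from the top value of `P` downwards is a
sequence of elementary collapses. -/

open Metric Filter Topology
open scoped symmDiff

section Nerve

variable {ι E : Type*}

-- Intersecting with the union makes `faceSet U ∅` the union, matching the convention of `nerveOf`
-- for the empty face.
def faceSet (U : ι → Set E) (σ : Finset ι) : Set E :=
  (⋃ i, U i) ∩ ⋂ i ∈ σ, U i

theorem mem_nerveOf_iff {U : ι → Set E} {σ : Finset ι} :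
    σ ∈ nerveOf U ↔ (faceSet U σ).Nonempty := by
  constructor
  · rintro ⟨⟨j, y, hy⟩, x, hx⟩
    rcases σ.eq_empty_or_nonempty with rfl | ⟨i, hi⟩
    · exact ⟨y, mem_iUnion.2 ⟨j, hy⟩, by simp⟩
    · exact ⟨x, mem_iUnion.2 ⟨i, hx i hi⟩, mem_iInter₂.2 hx⟩
  · rintro ⟨x, hxU, hx⟩
    obtain ⟨j, hj⟩ := mem_iUnion.1 hxU
    exact ⟨⟨j, x, hj⟩, x, mem_iInter₂.1 hx⟩

theorem faceSet_inter (U : ι → Set E) (H : Set E) (σ : Finset ι) :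
    faceSet (fun i => U i ∩ H) σ = faceSet U σ ∩ H := by
  ext x
  simp only [faceSet, mem_inter_iff, mem_iUnion, mem_iInter]
  grind

theorem mem_nerveOf_inter_iff {U : ι → Set E} {H : Set E} {σ : Finset ι} :
    σ ∈ nerveOf (fun i => U i ∩ H) ↔ (faceSet U σ ∩ H).Nonempty := by
  rw [mem_nerveOf_iff, faceSet_inter]

theorem faceSet_anti {U : ι → Set E} {σ τ : Finset ι} (h : σ ⊆ τ) :
    faceSet U τ ⊆ faceSet U σ :=
  inter_subset_inter_right _ (biInter_subset_biInter_left h)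

theorem faceSet_insert [DecidableEq ι] (U : ι → Set E) (i : ι) (σ : Finset ι) :
    faceSet U (insert i σ) = faceSet U σ ∩ U i := by
  ext x
  simp only [faceSet, mem_inter_iff, mem_iInter, Finset.mem_insert]
  grind

theorem nerveOf_mono {U W : ι → Set E} (h : ∀ i, U i ⊆ W i) : nerveOf U ⊆ nerveOf W :=
  fun _ ⟨⟨i, x, hx⟩, y, hy⟩ => ⟨⟨i, x, h i hx⟩, y, fun j hj => h j (hy j hj)⟩

theorem isSimplicialComplex_nerveOf (U : ι → Set E) : IsSimplicialComplex (nerveOf U) :=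
  fun _ ⟨hne, x, hx⟩ _ hτ => ⟨hne, x, fun i hi => hx i (hτ hi)⟩

theorem exists_finite_witnesses [Finite ι] (U : ι → Set E) :
    ∃ W : Set E, W.Finite ∧ W ⊆ ⋃ i, U i ∧ ∀ σ ∈ nerveOf U, ∃ w ∈ W, ∀ i ∈ σ, w ∈ U i := by
  have hw (σ : nerveOf U) : (mem_nerveOf_iff.1 σ.2).some ∈ faceSet U σ :=
    (mem_nerveOf_iff.1 σ.2).some_mem
  refine ⟨range fun σ : nerveOf U => (mem_nerveOf_iff.1 σ.2).some, finite_range _, ?_, ?_⟩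
  · rintro _ ⟨σ, rfl⟩
    exact (hw σ).1
  · intro σ hσ
    exact ⟨_, mem_range_self (⟨σ, hσ⟩ : nerveOf U), mem_iInter₂.1 (hw ⟨σ, hσ⟩).2⟩

theorem nerveOf_eq_of_witnesses {U K : ι → Set E} {W : Set E} (hKU : ∀ i, K i ⊆ U i)
    (hWU : W ⊆ ⋃ i, U i) (hWK : ∀ w ∈ W, ∀ i, w ∈ U i → w ∈ K i)
    (hW : ∀ σ ∈ nerveOf U, ∃ w ∈ W, ∀ i ∈ σ, w ∈ U i) : nerveOf K = nerveOf U := by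
  refine (nerveOf_mono hKU).antisymm fun σ hσ => ?_
  obtain ⟨w, hwW, hwσ⟩ := hW σ hσ
  obtain ⟨j, hj⟩ := mem_iUnion.1 (hWU hwW)
  exact ⟨⟨j, w, hWK w hwW j hj⟩, w, fun i hi => hWK w hwW i (hwσ i hi)⟩

end Nerve

namespace Finset

variable {α : Type*} [DecidableEq α] {s : Finset α} {a : α}

theorem symmDiff_singleton_of_mem (h : a ∈ s) : s ∆ {a} = s.erase a := by
  ext x
  simp only [mem_symmDiff, mem_singleton, mem_erase]
  grind

theorem symmDiff_singleton_of_notMem (h : a ∉ s) : s ∆ {a} = insert a s := by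
  ext x
  simp only [mem_symmDiff, mem_singleton, mem_insert]
  grind

theorem erase_symmDiff_singleton (s : Finset α) (a : α) : (s ∆ {a}).erase a = s.erase a := by
  ext x
  simp only [mem_erase, mem_symmDiff, mem_singleton]
  grind

end Finset

section Collapse

variable {V : Type*} [DecidableEq V]

theorem isFreeFace_of_cofaces {Δ : Set (Finset V)} {σ : Finset V} {v : V} (hv : v ∉ σ)
    (hσ : σ ∈ Δ) (hβ : insert v σ ∈ Δ) (hcof : ∀ τ ∈ Δ, σ ⊆ τ → τ = σ ∨ τ = insert v σ) :
    IsFreeFace Δ σ := by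
  have hne : insert v σ ≠ σ := fun h => hv (h ▸ Finset.mem_insert_self v σ)
  have hfacet : IsFacet Δ (insert v σ) := ⟨hβ, fun τ hτ hβτ =>
    (hcof τ hτ ((Finset.subset_insert v σ).trans hβτ)).resolve_left
      fun h => hv (h ▸ hβτ (Finset.mem_insert_self v σ))⟩
  refine ⟨hσ, fun h => hne (h.2 _ hβ (Finset.subset_insert v σ)),
    insert v σ, ⟨hfacet, Finset.subset_insert v σ⟩, fun τ ⟨hτ, hστ⟩ => ?_⟩
  rcases hcof τ hτ.1 hστ with rfl | rfl
  · exact absurd (hτ.2 _ hβ (Finset.subset_insert v _)) hne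
  · rfl

variable {X α : Type*} [LinearOrder α] (P : Finset V → X) (key : X → α) (m : X → V)

def toggle (γ : Finset V) : Finset V :=
  γ ∆ {m (P γ)}

variable {P m}

theorem toggle_toggle {γ : Finset V} (h : P (toggle P m γ) = P γ) :
    toggle P m (toggle P m γ) = γ := by
  rw [toggle, h, toggle, symmDiff_symmDiff_cancel_right]

theorem exists_free_pair {R : Finset (Finset V)} (hR : R.Nonempty)
    (hmatch : ∀ γ ∈ R, toggle P m γ ∈ R ∧ P (toggle P m γ) = P γ)
    (hmono : ∀ γ ∈ R, ∀ δ ∈ R, γ ⊆ δ → P γ = P δ ∨ key (P γ) < key (P δ)) :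
    ∃ σ ∈ R, m (P σ) ∉ σ ∧ insert (m (P σ)) σ ∈ R ∧
      ∀ τ ∈ R, σ ⊆ τ → τ = σ ∨ τ = insert (m (P σ)) σ := by
  classical
  obtain ⟨γ₁, hγ₁, hmax⟩ := R.exists_max_image (fun γ => key (P γ)) hR
  set p := P γ₁
  set w := m p
  set A := R.filter fun γ => P γ = p ∧ w ∉ γ
  have hA : A.Nonempty := by
    by_cases hw : w ∈ γ₁
    · refine ⟨toggle P m γ₁, Finset.mem_filter.2 ⟨(hmatch γ₁ hγ₁).1, (hmatch γ₁ hγ₁).2, ?_⟩⟩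
      rw [toggle, Finset.symmDiff_singleton_of_mem hw]
      exact Finset.notMem_erase w γ₁
    · exact ⟨γ₁, Finset.mem_filter.2 ⟨hγ₁, rfl, hw⟩⟩
  -- the free face: a largest face without `w` among those where `P` takes its top value `p`
  obtain ⟨σ, hσA, hσmax⟩ := A.exists_max_image Finset.card hA
  obtain ⟨hσR, hσp, hwσ⟩ := Finset.mem_filter.1 hσA
  have hcard : ∀ τ ∈ A, σ ⊆ τ → τ = σ := fun τ hτ hστ =>
    (Finset.eq_of_subset_of_card_le hστ (hσmax τ hτ)).symm
  have htop : ∀ τ ∈ R, σ ⊆ τ → P τ = p := fun τ hτ hστ =>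
    (hmono σ hσR τ hτ hστ).elim (fun h => h ▸ hσp) fun h =>
      absurd (hmax τ hτ) (not_le.2 (hσp ▸ h))
  refine ⟨σ, hσR, ?_⟩
  rw [hσp]
  refine ⟨hwσ, ?_, fun τ hτ hστ => ?_⟩
  · have h := (hmatch σ hσR).1
    rwa [toggle, hσp, Finset.symmDiff_singleton_of_notMem hwσ] at h
  · by_cases hwτ : w ∈ τ
    · have hτ' : toggle P m τ = τ.erase w := by
        rw [toggle, htop τ hτ hστ, Finset.symmDiff_singleton_of_mem hwτ]
      have hmem : τ.erase w ∈ A := Finset.mem_filter.2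
        ⟨hτ' ▸ (hmatch τ hτ).1, hτ' ▸ (hmatch τ hτ).2.trans (htop τ hτ hστ),
          Finset.notMem_erase w τ⟩
      right
      rw [← hcard _ hmem (Finset.subset_erase.2 ⟨hστ, hwσ⟩), Finset.insert_erase hwτ]
    · exact .inl (hcard τ (Finset.mem_filter.2 ⟨hτ, htop τ hτ hστ, hwτ⟩) hστ)

theorem collapsesTo_union_of_matching {Γ : Set (Finset V)} (hΓ : IsSimplicialComplex Γ)
    (R : Finset (Finset V)) (hRΓ : ∀ γ ∈ R, γ ∉ Γ)
    (hmatch : ∀ γ ∈ R, toggle P m γ ∈ R ∧ P (toggle P m γ) = P γ)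
    (hmono : ∀ γ ∈ R, ∀ δ ∈ R, γ ⊆ δ → P γ = P δ ∨ key (P γ) < key (P δ)) :
    CollapsesTo (Γ ∪ ↑R) Γ := by
  induction R using Finset.strongInduction with
  | H R ih =>
  rcases R.eq_empty_or_nonempty with rfl | hR
  · simp only [Finset.coe_empty, union_empty]
    exact .refl
  obtain ⟨σ, hσR, hwσ, hβR, hcof⟩ := exists_free_pair key hR hmatch hmono
  set β := insert (m (P σ)) σ
  have hσβ : toggle P m σ = β := by rw [toggle, Finset.symmDiff_singleton_of_notMem hwσ]
  have hβσ : toggle P m β = σ := hσβ ▸ toggle_toggle (hmatch σ hσR).2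
  set R' := (R.erase σ).erase β
  have hR' : ∀ {γ}, γ ∈ R' ↔ γ ≠ β ∧ γ ≠ σ ∧ γ ∈ R := by
    simp only [R', Finset.mem_erase, implies_true]
  have hcof' : ∀ τ ∈ Γ ∪ ↑R, σ ⊆ τ → τ = σ ∨ τ = β := by
    rintro τ (hτ | hτ) hστ
    · exact absurd (hΓ τ hτ σ hστ) (hRΓ σ hσR)
    · exact hcof τ hτ hστ
  have hstep : ElemCollapse (Γ ∪ ↑R) (Γ ∪ ↑R') := by
    refine ⟨σ, isFreeFace_of_cofaces hwσ (.inr hσR) (.inr hβR) hcof', ?_⟩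
    ext τ
    simp only [mem_union, Finset.mem_coe, hR', mem_ofPred_eq]
    constructor
    · rintro (hτ | ⟨hτβ, hτσ, hτ⟩)
      · exact ⟨.inl hτ, fun hστ => hRΓ σ hσR (hΓ τ hτ σ hστ)⟩
      · exact ⟨.inr hτ, fun hστ => (hcof τ hτ hστ).elim hτσ hτβ⟩
    · rintro ⟨hτ | hτ, hστ⟩
      · exact .inl hτ
      · exact .inr ⟨fun h => hστ (h ▸ Finset.subset_insert _ σ), fun h => hστ (h ▸ subset_rfl), hτ⟩
  refine .head hstep (ih R' ?_ (fun γ hγ => hRΓ γ (hR'.1 hγ).2.2) (fun γ hγ => ?_)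
    fun γ hγ δ hδ => hmono γ (hR'.1 hγ).2.2 δ (hR'.1 hδ).2.2)
  · exact Finset.ssubset_iff_subset_ne.2 ⟨fun γ hγ => (hR'.1 hγ).2.2,
      fun h => (hR'.1 (h ▸ hσR : σ ∈ R')).2.1 rfl⟩
  · obtain ⟨hγβ, hγσ, hγR⟩ := hR'.1 hγ
    have hinv := toggle_toggle (hmatch γ hγR).2
    refine ⟨hR'.2 ⟨fun h => hγσ ?_, fun h => hγβ ?_, (hmatch γ hγR).1⟩, (hmatch γ hγR).2⟩
    · rw [← hinv, h, hβσ]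
    · rw [← hinv, h, hσβ]

theorem collapsesTo_of_matching {Δ Γ : Set (Finset V)} (hΓ : IsSimplicialComplex Γ)
    (hΓΔ : Γ ⊆ Δ) (hfin : (Δ \ Γ).Finite)
    (hmatch : ∀ γ ∈ Δ \ Γ, toggle P m γ ∈ Δ \ Γ ∧ P (toggle P m γ) = P γ)
    (hmono : ∀ γ ∈ Δ \ Γ, ∀ δ ∈ Δ \ Γ, γ ⊆ δ → P γ = P δ ∨ key (P γ) < key (P δ)) :
    CollapsesTo Δ Γ := by
  have h := collapsesTo_union_of_matching key hΓ hfin.toFinset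
    (fun γ hγ => (hfin.mem_toFinset.1 hγ).2) (by simpa using hmatch) (by simpa using hmono)
  rwa [hfin.coe_toFinset, union_sdiff_cancel hΓΔ] at h

end Collapse

section LexMin

variable {E : Type*} [NormedAddCommGroup E] [InnerProductSpace ℝ E] (f : E →L[ℝ] ℝ)

def lexKey (x : E) : ℝ ×ₗ ℝ :=
  toLex (f x, ‖x‖ ^ 2)

def IsLexMin (S : Set E) (x : E) : Prop :=
  x ∈ S ∧ ∀ y ∈ S, lexKey f x ≤ lexKey f y

noncomputable def lexMin (S : Set E) : E :=
  Classical.epsilon (IsLexMin f S)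

theorem strictConvexOn_norm_sq : StrictConvexOn ℝ univ fun x : E => ‖x‖ ^ 2 := by
  have : StrongConvexOn univ 2 fun x : E => ‖x‖ ^ 2 :=
    strongConvexOn_iff_convex.2 (by simpa using convexOn_const (0 : ℝ) convex_univ)
  exact this.strictConvexOn two_pos

theorem lexKey_combo_lt {x y : E} (hxy : x ≠ y) (h : lexKey f y ≤ lexKey f x) {a b : ℝ}
    (ha : 0 < a) (hb : 0 < b) (hab : a + b = 1) : lexKey f (a • x + b • y) < lexKey f x := by
  have hsq : ‖a • x + b • y‖ ^ 2 < a * ‖x‖ ^ 2 + b * ‖y‖ ^ 2 :=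
    strictConvexOn_norm_sq.2 trivial trivial hxy ha hb hab
  have hf : f (a • x + b • y) = a * f x + b * f y := by simp
  rw [lexKey, lexKey, Prod.Lex.toLex_le_toLex'] at h
  rw [lexKey, lexKey, Prod.Lex.toLex_lt_toLex']
  dsimp only at h ⊢
  rw [hf]
  have hcomb (t : ℝ) : a * t + b * t = t := by rw [← add_mul, hab, one_mul]
  have hby := mul_le_mul_of_nonneg_left h.1 hb.le
  refine ⟨by linarith [hcomb (f x)], fun heq => ?_⟩
  have hfxy : f y = f x := by
    by_contra hne
    linarith [mul_lt_mul_of_pos_left (lt_of_le_of_ne h.1 hne) hb, hcomb (f x)]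
  linarith [mul_le_mul_of_nonneg_left (h.2 hfxy) hb.le, hcomb (‖x‖ ^ 2)]

theorem exists_isLexMin {S : Set E} (hS : IsCompact S) (hne : S.Nonempty) :
    ∃ x, IsLexMin f S x := by
  obtain ⟨x₀, hx₀S, hx₀⟩ := hS.exists_isMinOn hne f.continuous.continuousOn
  obtain ⟨x, ⟨hxS, hfx⟩, hx⟩ := (hS.inter_right (isClosed_singleton.preimage f.continuous))
    |>.exists_isMinOn ⟨x₀, hx₀S, rfl⟩ (continuous_norm.pow 2).continuousOn
  refine ⟨x, hxS, fun y hy => Prod.Lex.toLex_le_toLex'.2 ⟨?_, fun h => hx ⟨hy, ?_⟩⟩⟩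
  · exact (hfx : f x = f x₀) ▸ hx₀ hy
  · exact h.symm.trans hfx

theorem isLexMin_lexMin {S : Set E} (hS : IsCompact S) (hne : S.Nonempty) :
    IsLexMin f S (lexMin f S) :=
  Classical.epsilon_spec (exists_isLexMin f hS hne)

variable {f}

theorem IsLexMin.eq {S : Set E} (hS : Convex ℝ S) {x y : E} (hx : IsLexMin f S x)
    (hy : IsLexMin f S y) : x = y := by
  by_contra hxy
  exact (hx.2 _ (hS hx.1 hy.1 one_half_pos.le one_half_pos.le (add_halves 1))).not_gt
    (lexKey_combo_lt f hxy (hy.2 x hx.1) one_half_pos one_half_pos (add_halves 1))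

theorem IsLexMin.eq_or_lt {S : Set E} (hS : Convex ℝ S) {x y : E} (hx : IsLexMin f S x)
    (hy : y ∈ S) : x = y ∨ lexKey f x < lexKey f y := by
  refine (hx.2 y hy).lt_or_eq.symm.imp (fun h => hx.eq hS ⟨hy, fun z hz => ?_⟩) id
  exact h ▸ hx.2 z hz

-- On a convex set a local lexicographic minimum is global: moving from `x` towards a point with
-- smaller key decreases the key right away.
theorem IsLexMin.of_inter_ball {S : Set E} (hS : Convex ℝ S) {x : E} {r : ℝ} (hr : 0 < r)
    (hx : IsLexMin f (S ∩ ball x r) x) : IsLexMin f S x := by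
  refine ⟨hx.1.1, fun y hy => not_lt.1 fun hlt => ?_⟩
  have hxy : x ≠ y := by
    rintro rfl
    exact lt_irrefl _ hlt
  have hlim : Tendsto (fun t : ℝ => (1 - t) • x + t • y) (𝓝[>] 0) (𝓝 x) := by
    have : Continuous fun t : ℝ => (1 - t) • x + t • y := by fun_prop
    simpa using (this.tendsto 0).mono_left nhdsWithin_le_nhds
  obtain ⟨t, ht, htr⟩ :=
    Filter.nonempty_of_mem (inter_mem (Ioo_mem_nhdsGT one_pos) (hlim (ball_mem_nhds x hr)))
  have ht' : 0 < 1 - t := sub_pos.2 ht.2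
  exact (hx.2 _ ⟨hS hx.1.1 hy ht'.le ht.1.le (sub_add_cancel 1 t), htr⟩).not_gt
    (lexKey_combo_lt f hxy hlt.le ht' ht.1 (sub_add_cancel 1 t))

theorem isLexMin_inter_iff {S T : Set E} (hS : Convex ℝ S) {p : E} {r : ℝ} (hr : 0 < r)
    (hp : p ∈ S) (hball : S ∩ ball p r ⊆ T) : IsLexMin f (S ∩ T) p ↔ IsLexMin f S p :=
  ⟨fun h => IsLexMin.of_inter_ball hS hr
      ⟨⟨hp, mem_ball_self hr⟩, fun y hy => h.2 y ⟨hy.1, hball hy⟩⟩,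
    fun h => ⟨⟨hp, hball ⟨hp, mem_ball_self hr⟩⟩, fun y hy => h.2 y hy.1⟩⟩

end LexMin

section Shrinking

variable {ι E : Type*}

def IsLebesgueNumber [PseudoMetricSpace E] (K : ι → Set E) (r : ℝ) : Prop :=
  ∀ p ∈ ⋃ i, K i, ∃ v, (⋃ i, K i) ∩ ball p r ⊆ K v

theorem isClosed_setOf_ball_subset [PseudoMetricSpace E] (U : Set E) (r : ℝ) :
    IsClosed {x | ball x r ⊆ U} := by
  have : {x | ball x r ⊆ U} = ⋂ y ∈ Uᶜ, {x | r ≤ dist y x} := by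
    ext x
    simp only [mem_ofPred_eq, subset_def, mem_ball, mem_iInter, mem_compl_iff, ← not_lt]
    exact forall_congr' fun y => by tauto
  rw [this]
  exact isClosed_biInter fun y _ =>
    isClosed_le continuous_const (continuous_const.dist continuous_id)

theorem Convex.setOf_ball_subset [SeminormedAddCommGroup E] [NormedSpace ℝ E] {U : Set E}
    (hU : Convex ℝ U) (r : ℝ) : Convex ℝ {x | ball x r ⊆ U} := by
  have : {x | ball x r ⊆ U} = ⋂ u ∈ ball (0 : E) r, (fun x => x + u) ⁻¹' U := by
    ext x
    simp only [mem_ofPred_eq, subset_def, mem_iInter, mem_preimage, mem_ball_iff_norm, sub_zero]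
    exact ⟨fun h u hu => h _ (by simpa using hu), fun h z hz => by simpa using h _ hz⟩
  rw [this]
  exact convex_iInter₂ fun u _ => hU.translate_preimage_left u

theorem eventually_forall_ball_subset [PseudoMetricSpace E] [Finite ι] {W : Set E}
    (hW : W.Finite) {U : ι → Set E} (hU : ∀ i, IsOpen (U i)) :
    ∀ᶠ r in 𝓝[>] 0, ∀ w ∈ W, ∀ i, w ∈ U i → ball w r ⊆ U i := by
  rw [eventually_all_finite hW]
  refine fun w _ => eventually_all.2 fun i => eventually_imp_distrib_left.2 fun hw => ?_
  obtain ⟨ε, hε, hball⟩ := Metric.isOpen_iff.1 (hU i) w hw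
  filter_upwards [Ioo_mem_nhdsGT hε] with r hr using (ball_subset_ball hr.2.le).trans hball

-- Keep the points of the convex hull of `W` whose `s`-ball lies in `U i`, for `s` below a
-- Lebesgue number `ρ` of the hull and small enough that the balls around `W` stay inside.
theorem exists_compact_convex_shrinking [NormedAddCommGroup E] [NormedSpace ℝ E] [Finite ι]
    {U : ι → Set E} (hUo : ∀ i, IsOpen (U i)) (hUc : ∀ i, Convex ℝ (U i))
    (hB : Convex ℝ (⋃ i, U i)) {W : Set E} (hW : W.Finite) (hWU : W ⊆ ⋃ i, U i) :
    ∃ (K : ι → Set E) (r : ℝ), 0 < r ∧ (∀ i, IsCompact (K i) ∧ Convex ℝ (K i) ∧ K i ⊆ U i) ∧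
      Convex ℝ (⋃ i, K i) ∧ IsLebesgueNumber K r ∧ ∀ w ∈ W, ∀ i, w ∈ U i → w ∈ K i := by
  set C := convexHull ℝ W
  have hCc : IsCompact C := hW.isCompact_convexHull (𝕜 := ℝ)
  obtain ⟨ρ, hρ, hleb⟩ := lebesgue_number_lemma_of_metric hCc hUo (convexHull_min hWU hB)
  obtain ⟨s, ⟨hs, hsρ⟩, hsW⟩ :=
    Filter.nonempty_of_mem (inter_mem (Ioo_mem_nhdsGT hρ) (eventually_forall_ball_subset hW hUo))
  have hKC : ⋃ i, (C ∩ {x | ball x s ⊆ U i}) = C := by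
    refine Subset.antisymm (iUnion_subset fun i => inter_subset_left) fun x hx => ?_
    obtain ⟨i, hi⟩ := hleb x hx
    exact mem_iUnion.2 ⟨i, hx, (ball_subset_ball hsρ.le).trans hi⟩
  refine ⟨fun i => C ∩ {x | ball x s ⊆ U i}, ρ - s, sub_pos.2 hsρ, fun i => ⟨?_, ?_, ?_⟩,
    ?_, ?_, fun w hw i hwi => ⟨subset_convexHull ℝ W hw, hsW w hw i hwi⟩⟩
  · exact hCc.inter_right (isClosed_setOf_ball_subset _ _)
  · exact (convex_convexHull ℝ W).inter ((hUc i).setOf_ball_subset s)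
  · exact fun x hx => hx.2 (mem_ball_self hs)
  · beta_reduce
    rw [hKC]
    exact convex_convexHull ℝ W
  · rw [IsLebesgueNumber, hKC]
    intro p hp
    obtain ⟨i, hi⟩ := hleb p hp
    exact ⟨i, fun y hy => ⟨hy.1, (ball_subset_ball' (by linarith [mem_ball.1 hy.2])).trans hi⟩⟩

end Shrinking

section NerveCollapse

variable {ι E : Type*} [NormedAddCommGroup E] [InnerProductSpace ℝ E]

theorem isLexMin_faceSet_iff_erase [DecidableEq ι] (f : E →L[ℝ] ℝ) {K : ι → Set E}
    {τ : Finset ι} {w : ι} (hconv : Convex ℝ (faceSet K (τ.erase w))) {p : E} {r : ℝ}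
    (hr : 0 < r) (hp : p ∈ faceSet K (τ.erase w)) (hball : (⋃ i, K i) ∩ ball p r ⊆ K w) :
    IsLexMin f (faceSet K τ) p ↔ IsLexMin f (faceSet K (τ.erase w)) p := by
  by_cases hw : w ∈ τ
  · conv_lhs => rw [← Finset.insert_erase hw, faceSet_insert]
    exact isLexMin_inter_iff hconv hr hp fun x hx => hball ⟨hx.1.1, hx.2⟩
  · rw [Finset.erase_eq_of_notMem hw]

theorem collapsesTo_nerveOf_inter_preimage [Finite ι] {K : ι → Set E}
    (hKc : ∀ i, IsCompact (K i)) (hKv : ∀ i, Convex ℝ (K i)) (hC : Convex ℝ (⋃ i, K i))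
    {r : ℝ} (hr : 0 < r) (hleb : IsLebesgueNumber K r) (f : E →L[ℝ] ℝ) {L : Set ℝ}
    (hL : IsLowerSet L) : CollapsesTo (nerveOf K) (nerveOf fun i => K i ∩ f ⁻¹' L) := by
  classical
  rcases isEmpty_or_nonempty ι with hι | hι
  · have hempty (G : ι → Set E) : nerveOf G = ∅ := by simp [nerveOf]
    rw [hempty, hempty]
    exact .refl
  choose! m hm using hleb
  have hcompact (γ : Finset ι) : IsCompact (faceSet K γ) :=
    (isCompact_iUnion hKc).inter_right (isClosed_biInter fun i _ => (hKc i).isClosed)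
  have hconvex (γ : Finset ι) : Convex ℝ (faceSet K γ) :=
    hC.inter (convex_iInter₂ fun i _ => hKv i)
  set P := fun γ => lexMin f (faceSet K γ)
  have hP : ∀ γ ∈ nerveOf K, IsLexMin f (faceSet K γ) (P γ) := fun γ hγ =>
    isLexMin_lexMin f (hcompact γ) (mem_nerveOf_iff.1 hγ)
  have htoggle : ∀ γ ∈ nerveOf K, IsLexMin f (faceSet K (toggle P m γ)) (P γ) := by
    intro γ hγ
    have hp := hP γ hγ
    have hball := hm _ hp.1.1
    have hpS := faceSet_anti (γ.erase_subset (m (P γ))) hp.1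
    have herase : (toggle P m γ).erase (m (P γ)) = γ.erase (m (P γ)) :=
      Finset.erase_symmDiff_singleton _ _
    rw [isLexMin_faceSet_iff_erase f (hconvex _) hr _ hball, herase,
      ← isLexMin_faceSet_iff_erase f (hconvex _) hr hpS hball]
    · exact hp
    · rwa [herase]
  refine collapsesTo_of_matching (P := P) (m := m) (lexKey f) (isSimplicialComplex_nerveOf _)
    (nerveOf_mono fun i => inter_subset_left) (toFinite _) ?_ ?_
  · rintro γ ⟨hγ, hγΓ⟩
    have hT := htoggle γ hγ
    have hTΔ : toggle P m γ ∈ nerveOf K := mem_nerveOf_iff.2 ⟨_, hT.1⟩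
    refine ⟨⟨hTΔ, fun hTΓ => hγΓ ?_⟩, (hT.eq (hconvex _) (hP _ hTΔ)).symm⟩
    -- every point of the toggled face has key at least that of `P γ`, which lies outside `L`
    obtain ⟨y, hy, hyL⟩ := mem_nerveOf_inter_iff.1 hTΓ
    exact mem_nerveOf_inter_iff.2
      ⟨P γ, (hP γ hγ).1, hL (Prod.Lex.toLex_le_toLex'.1 (hT.2 y hy)).1 hyL⟩
  · rintro γ ⟨hγ, -⟩ δ ⟨hδ, -⟩ hγδ
    exact (hP γ hγ).eq_or_lt (hconvex γ) (faceSet_anti hγδ (hP δ hδ).1)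

end NerveCollapse

/-- **Theorem (halfspace collapse).** If `{U i}` is a `d`-convex union
representation of `Δ` and `H ⊆ ℝ^d` is a closed or open halfspace, then `Δ`
collapses onto the nerve of `{U i ∩ H}`. -/
theorem collapsesTo_nerve_inter_halfspace {n d : ℕ} (Δ : Set (Finset (Fin n)))
    (U : Fin n → Set (Euc d)) (hU : IsCURep U Δ)
    (H : Set (Euc d)) (hH : IsHalfspace H) :
    CollapsesTo Δ (nerveOf fun i => U i ∩ H) := by
  obtain ⟨hUc, hUo, hB, rfl⟩ := hU
  obtain ⟨f, L, hL, rfl⟩ : ∃ (f : Euc d →L[ℝ] ℝ) (L : Set ℝ), IsLowerSet L ∧ H = f ⁻¹' L := by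
    obtain ⟨f, c, -, rfl | rfl⟩ := hH
    exacts [⟨LinearMap.toContinuousLinearMap f, Iio c, isLowerSet_Iio c, rfl⟩,
      ⟨LinearMap.toContinuousLinearMap f, Iic c, isLowerSet_Iic c, rfl⟩]
  obtain ⟨W₁, hW₁, hW₁U, hW₁σ⟩ := exists_finite_witnesses U
  obtain ⟨W₂, hW₂, hW₂U, hW₂σ⟩ := exists_finite_witnesses fun i => U i ∩ f ⁻¹' L
  obtain ⟨K, r, hr, hK, hKconv, hleb, hWK⟩ := exists_compact_convex_shrinking hUo hUc hB
    (hW₁.union hW₂) (union_subset hW₁U (hW₂U.trans (iUnion_mono fun i => inter_subset_left)))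
  have hnerve : nerveOf K = nerveOf U :=
    nerveOf_eq_of_witnesses (fun i => (hK i).2.2) hW₁U (fun w hw => hWK w (.inl hw)) hW₁σ
  have hnerveH : nerveOf (fun i => K i ∩ f ⁻¹' L) = nerveOf fun i => U i ∩ f ⁻¹' L :=
    nerveOf_eq_of_witnesses (fun i => inter_subset_inter_left _ (hK i).2.2) hW₂U
      (fun w hw i hwi => ⟨hWK w (.inr hw) i hwi.1, hwi.2⟩) hW₂σ
  rw [← hnerve, ← hnerveH]
  exact collapsesTo_nerveOf_inter_preimage (fun i => (hK i).1) (fun i => (hK i).2.1) hKconv hr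
    hleb f hL
end

section
/- Let Δ be a simplicial complex that is not d-convex union representable. Then the suspension ΣΔ of Δ is not (d+1)-convex union representable. In particular, if Δ is not convex union representable, then neither is ΣΔ. -/
open Set

/-- The suspension of `Δ`: the join of `Δ` with the `0`-dimensional sphere on
two new vertices (`Sum.inr 0` and `Sum.inr 1`). -/
def suspension {V : Type*} [DecidableEq V] (Δ : Set (Finset V)) :
    Set (Finset (V ⊕ Fin 2)) :=
  {σ | ∃ τ ∈ Δ, ∃ s : Finset (Fin 2), s.card ≤ 1 ∧
    σ = τ.image Sum.inl ∪ s.image Sum.inr}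

-- auxiliary lemmas
lemma isCUR_empty {V : Type*} (d : ℕ) : IsCUR d (∅ : Set (Finset V)) := by
  refine ⟨fun _ => ∅, fun _ => convex_empty, fun _ => isOpen_empty, by simpa using convex_empty, ?_⟩
  ext σ; simp [nerveOf]

lemma mem_susp_inl {V : Type*} [DecidableEq V] {Δ : Set (Finset V)} {σ : Finset V} :
    σ.image Sum.inl ∈ suspension Δ ↔ σ ∈ Δ := by
  constructor
  · rintro ⟨τ, hτ, s, hs, heq⟩
    have hs0 : s = ∅ := by
      rcases Finset.eq_empty_or_nonempty s with h | ⟨k, hk⟩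
      · exact h
      · exfalso
        have : Sum.inr k ∈ σ.image Sum.inl := by
          rw [heq]; exact Finset.mem_union_right _ (Finset.mem_image_of_mem _ hk)
        simp at this
    subst hs0
    simp only [Finset.image_empty, Finset.union_empty] at heq
    rw [Finset.image_injective Sum.inl_injective heq]; exact hτ
  · exact fun h => ⟨σ, h, ∅, by simp, by simp⟩

lemma susp_inl_union_inr {V : Type*} [DecidableEq V] {Δ : Set (Finset V)} {σ : Finset V}
    (h : σ ∈ Δ) (k : Fin 2) : σ.image Sum.inl ∪ {Sum.inr k} ∈ suspension Δ :=
  ⟨σ, h, {k}, by simp, by simp⟩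

lemma pair_inr_not_mem_susp {V : Type*} [DecidableEq V] {Δ : Set (Finset V)} :
    ({Sum.inr 0, Sum.inr 1} : Finset (V ⊕ Fin 2)) ∉ suspension Δ := by
  rintro ⟨τ, hτ, s, hs, heq⟩
  have hsub : ({0, 1} : Finset (Fin 2)) ⊆ s := by
    intro k hk
    have hm : Sum.inr k ∈ τ.image Sum.inl ∪ s.image Sum.inr := by
      rw [← heq]; simp at hk ⊢; rcases hk with rfl | rfl <;> simp
    simpa using hm
  have := Finset.card_le_card hsub
  simp at this; omega

lemma main_lemma {n d : ℕ} {Δ : Set (Finset (Fin n))}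
    (hΔ : IsSimplicialComplex Δ) (hne : Δ.Nonempty)
    (h : IsCUR (d + 1) (suspension Δ)) : IsCUR d Δ := by
  obtain ⟨U, hconv, hopen, hcu, hnerve⟩ := h
  have hempty : (∅ : Finset (Fin n)) ∈ Δ := by
    obtain ⟨σ, hσ⟩ := hne; exact hΔ σ hσ ∅ (Finset.empty_subset σ)
  -- for each face σ and each suspension point k, a common point
  have hmem : ∀ σ ∈ Δ, ∀ k : Fin 2,
      ∃ x, (∀ v ∈ σ, x ∈ U (Sum.inl v)) ∧ x ∈ U (Sum.inr k) := by
    intro σ hσ k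
    have hm : σ.image Sum.inl ∪ {Sum.inr k} ∈ nerveOf U := by
      rw [hnerve]; exact susp_inl_union_inr hσ k
    obtain ⟨-, x, hx⟩ := hm
    exact ⟨x, fun v hv => hx _ (Finset.mem_union_left _ (Finset.mem_image_of_mem _ hv)),
      hx _ (Finset.mem_union_right _ (Finset.mem_singleton_self _))⟩
  have hdisj : Disjoint (U (Sum.inr 0)) (U (Sum.inr 1)) := by
    rw [Set.disjoint_left]
    intro x h0 h1
    have hm : ({Sum.inr 0, Sum.inr 1} : Finset (Fin n ⊕ Fin 2)) ∈ nerveOf U := by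
      refine ⟨⟨Sum.inr 0, x, h0⟩, x, ?_⟩
      intro i hi; simp at hi; rcases hi with rfl | rfl <;> assumption
    rw [hnerve] at hm
    exact pair_inr_not_mem_susp hm
  obtain ⟨p, -, hp⟩ := hmem ∅ hempty 0
  obtain ⟨q, -, hq⟩ := hmem ∅ hempty 1
  -- separating hyperplane
  obtain ⟨f, u, hf0, hf1⟩ := geometric_hahn_banach_open_open (hconv _) (hopen _)
    (hconv _) (hopen _) hdisj
  have hfp : f p < u := hf0 p hp
  have hfq : u < f q := hf1 q hq
  -- IVT inside convex sets
  have ivt : ∀ x y : Euc (d + 1), f x < u → u < f y → ∀ C : Set (Euc (d + 1)),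
      Convex ℝ C → x ∈ C → y ∈ C → ∃ z ∈ C, f z = u := by
    intro x y hx hy C hC hxC hyC
    have hcont : ContinuousOn (fun t : ℝ => f ((1 - t) • x + t • y)) (Set.Icc 0 1) :=
      (f.continuous.comp (by fun_prop)).continuousOn
    have hsub := intermediate_value_Icc (by norm_num : (0:ℝ) ≤ 1) hcont
    have hu : u ∈ Set.Icc ((fun t : ℝ => f ((1 - t) • x + t • y)) 0)
        ((fun t : ℝ => f ((1 - t) • x + t • y)) 1) := by
      simp only [Set.mem_Icc]
      norm_num
      constructor <;> linarith
    obtain ⟨t, ht, hft⟩ := hsub hu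
    exact ⟨(1 - t) • x + t • y, hC hxC hyC (by linarith [ht.1, ht.2]) ht.1 (by ring), hft⟩
  -- x₀ on the hyperplane, and surjectivity of f
  have hw : f (q - p) ≠ 0 := by
    rw [map_sub]
    intro hc
    have h2 : f q = f p := by linarith
    linarith
  have hsurj : Function.Surjective f := by
    intro c
    exact ⟨(c / f (q - p)) • (q - p), by rw [map_smul, smul_eq_mul, div_mul_cancel₀ _ hw]⟩
  obtain ⟨x₀, hx₀⟩ := hsurj u
  -- linear equivalence of Euc d with ker f
  have hsurj' : Function.Surjective (f : Euc (d+1) →ₗ[ℝ] ℝ) := hsurj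
  have hrank : Module.finrank ℝ (LinearMap.ker (f : Euc (d+1) →ₗ[ℝ] ℝ)) = d := by
    have h1 := LinearMap.finrank_range_add_finrank_ker (f : Euc (d+1) →ₗ[ℝ] ℝ)
    rw [LinearMap.range_eq_top.2 hsurj', finrank_top] at h1
    simp [finrank_euclideanSpace_fin] at h1
    omega
  let ℓ : Euc d ≃ₗ[ℝ] LinearMap.ker (f : Euc (d+1) →ₗ[ℝ] ℝ) :=
    LinearEquiv.ofFinrankEq _ _ (by rw [finrank_euclideanSpace_fin, hrank])
  let L : Euc d →ₗ[ℝ] Euc (d+1) :=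
    (LinearMap.ker (f : Euc (d+1) →ₗ[ℝ] ℝ)).subtype.comp (ℓ : Euc d →ₗ[ℝ] _)
  set φ : Euc d → Euc (d+1) := fun w => x₀ + L w with hφ
  have hφu : ∀ w, f (φ w) = u := by
    intro w
    have : f (L w) = 0 := (ℓ w).2
    simp only [hφ, map_add, this, add_zero, hx₀]
  have hφsurj : ∀ z : Euc (d+1), f z = u → ∃ w, φ w = z := by
    intro z hz
    have hk : z - x₀ ∈ LinearMap.ker (f : Euc (d+1) →ₗ[ℝ] ℝ) := by
      simp [LinearMap.mem_ker, map_sub, hz, hx₀]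
    refine ⟨ℓ.symm ⟨z - x₀, hk⟩, ?_⟩
    simp only [hφ, L, LinearMap.comp_apply, LinearEquiv.coe_coe, LinearEquiv.apply_symm_apply,
      Submodule.subtype_apply]
    abel
  have hφcont : Continuous φ := continuous_const.add L.continuous_of_finiteDimensional
  have hφconvex : ∀ s : Set (Euc (d+1)), Convex ℝ s → Convex ℝ (φ ⁻¹' s) := by
    intro s hs
    have : φ ⁻¹' s = L ⁻¹' ((fun y => x₀ + y) ⁻¹' s) := rfl
    rw [this]
    exact (hs.translate_preimage_right x₀).linear_preimage L
  -- the representation of Δ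
  set W : Fin n → Set (Euc d) := fun v => φ ⁻¹' (U (Sum.inl v)) with hW
  -- every point of the union on the hyperplane is in some U (inl v)
  have hunion : ∀ z : Euc (d+1), f z = u → z ∈ ⋃ i, U i → ∃ v, z ∈ U (Sum.inl v) := by
    intro z hz hzU
    obtain ⟨i, hi⟩ := Set.mem_iUnion.1 hzU
    match i with
    | Sum.inl v => exact ⟨v, hi⟩
    | Sum.inr 0 => exact absurd (hf0 z hi) (by rw [hz]; exact lt_irrefl u)
    | Sum.inr 1 => exact absurd (hf1 z hi) (by rw [hz]; exact lt_irrefl u)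
  -- a nonempty W
  have hWne : ∃ v, (W v).Nonempty := by
    obtain ⟨z, hzU, hz⟩ := ivt p q hfp hfq (⋃ i, U i) hcu
      (Set.mem_iUnion.2 ⟨_, hp⟩) (Set.mem_iUnion.2 ⟨_, hq⟩)
    obtain ⟨v, hv⟩ := hunion z hz hzU
    obtain ⟨w, hwz⟩ := hφsurj z hz
    exact ⟨v, w, by rw [hW]; simp only [Set.mem_preimage, hwz]; exact hv⟩
  refine ⟨W, fun v => hφconvex _ (hconv _), fun v => (hopen _).preimage hφcont, ?_, ?_⟩
  · -- union is convex
    have : ⋃ v, W v = φ ⁻¹' (⋃ i, U i) := by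
      ext w
      simp only [Set.mem_iUnion, hW, Set.mem_preimage]
      constructor
      · rintro ⟨v, hv⟩; exact ⟨Sum.inl v, hv⟩
      · rintro hm
        exact hunion (φ w) (hφu w) (Set.mem_iUnion.2 hm)
    rw [this]
    exact hφconvex _ hcu
  · -- nerve of W is Δ
    ext σ
    constructor
    · rintro ⟨-, w, hw⟩
      have hm : σ.image Sum.inl ∈ nerveOf U := by
        refine ⟨⟨Sum.inr 0, p, hp⟩, φ w, ?_⟩
        intro i hi
        simp only [Finset.mem_image] at hi
        obtain ⟨v, hv, rfl⟩ := hi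
        exact hw v hv
      rw [hnerve] at hm
      exact mem_susp_inl.1 hm
    · intro hσ
      obtain ⟨x, hxC, hx0⟩ := hmem σ hσ 0
      obtain ⟨y, hyC, hy1⟩ := hmem σ hσ 1
      have hC : Convex ℝ {z : Euc (d+1) | ∀ v ∈ σ, z ∈ U (Sum.inl v)} := by
        intro z1 hz1 z2 hz2 a b ha hb hab
        intro v hv
        exact (hconv _) (hz1 v hv) (hz2 v hv) ha hb hab
      obtain ⟨z, hzC, hz⟩ := ivt x y (hf0 x hx0) (hf1 y hy1) _ hC hxC hyC
      obtain ⟨w, hwz⟩ := hφsurj z hz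
      exact ⟨hWne, w, fun v hv => by
        simp only [hW, Set.mem_preimage, hwz]; exact hzC v hv⟩

lemma not_isCUR_zero_susp {n : ℕ} {Δ : Set (Finset (Fin n))}
    (hΔ : IsSimplicialComplex Δ) (hne : Δ.Nonempty) : ¬ IsCUR 0 (suspension Δ) := by
  rintro ⟨U, -, -, -, hnerve⟩
  have hempty : (∅ : Finset (Fin n)) ∈ Δ := by
    obtain ⟨σ, hσ⟩ := hne; exact hΔ σ hσ ∅ (Finset.empty_subset σ)
  have hk : ∀ k : Fin 2, ∃ x, x ∈ U (Sum.inr k) := by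
    intro k
    have hm : ({Sum.inr k} : Finset (Fin n ⊕ Fin 2)) ∈ nerveOf U := by
      rw [hnerve]
      have := susp_inl_union_inr hempty k
      simpa using this
    obtain ⟨-, x, hx⟩ := hm
    exact ⟨x, hx _ (Finset.mem_singleton_self _)⟩
  obtain ⟨x, hx⟩ := hk 0
  obtain ⟨y, hy⟩ := hk 1
  have hxy : x = y := Subsingleton.elim x y
  have hm : ({Sum.inr 0, Sum.inr 1} : Finset (Fin n ⊕ Fin 2)) ∈ nerveOf U := by
    refine ⟨⟨_, x, hx⟩, x, ?_⟩
    intro i hi; simp at hi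
    rcases hi with rfl | rfl
    · exact hx
    · rw [hxy]; exact hy
  rw [hnerve] at hm
  exact pair_inr_not_mem_susp hm

/-- **Corollary.** If `Δ` is not `d`-convex union representable then its
suspension is not `(d+1)`-convex union representable; in particular if `Δ` is
not convex union representable, neither is its suspension. -/
theorem suspension_not_CUR {n : ℕ} (Δ : Set (Finset (Fin n)))
    (hΔ : IsSimplicialComplex Δ) :
    (∀ d : ℕ, ¬ IsCUR d Δ → ¬ IsCUR (d + 1) (suspension Δ)) ∧
    (¬ ConvexUnionRepresentable Δ → ¬ ConvexUnionRepresentable (suspension Δ)) := by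
  constructor
  · intro d hd hsusp
    rcases Set.eq_empty_or_nonempty Δ with rfl | hne
    · exact hd (isCUR_empty d)
    · exact hd (main_lemma hΔ hne hsusp)
  · intro hcur hscur
    have hne : Δ.Nonempty := by
      rcases Set.eq_empty_or_nonempty Δ with rfl | hne
      · exact absurd ⟨0, isCUR_empty 0⟩ hcur
      · exact hne
    obtain ⟨e, he⟩ := hscur
    match e with
    | 0 => exact not_isCUR_zero_susp hΔ hne he
    | d + 1 => exact hcur ⟨d, main_lemma hΔ hne he⟩
end

section
/- Every cone is convex union representable. More precisely, if Δ is a simplicial complex that is d-representable by convex open sets in ℝ^d and v is a new vertex not in Δ, then the cone v * Δ = {σ ∪ τ : σ ∈ {∅,{v}}, τ ∈ Δ} is d-convex union representable. -/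
open Set

/-- The cone over `Δ` with a new apex vertex `none`. -/
def coneCplx {V : Type*} [DecidableEq V] (Δ : Set (Finset V)) :
    Set (Finset (Option V)) :=
  {σ | ∃ τ ∈ Δ, σ = τ.image some ∨ σ = insert none (τ.image some)}

/-- **Proposition.** Every cone is convex union representable: if `Δ` is
`d`-representable by convex open sets in `ℝ^d`, then the cone over `Δ` is
`d`-convex union representable. -/
theorem cone_CUR {n d : ℕ} (Δ : Set (Finset (Fin n)))
    (hΔ : IsSimplicialComplex Δ)
    (hrep : ∃ U : Fin n → Set (Euc d),
      (∀ i, Convex ℝ (U i)) ∧ (∀ i, IsOpen (U i)) ∧ nerveOf U = Δ) :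
    IsCUR d (coneCplx Δ) := by
  obtain ⟨U, hconv, hopen, hnerve⟩ := hrep
  by_cases hne : ∃ i, (U i).Nonempty
  · -- apex gets the whole space
    refine ⟨fun o => o.elim Set.univ U, ?_, ?_, ?_, ?_⟩
    · rintro (_ | i)
      · exact convex_univ
      · exact hconv i
    · rintro (_ | i)
      · exact isOpen_univ
      · exact hopen i
    · have : (⋃ o : Option (Fin n), (o.elim Set.univ U : Set (Euc d))) = Set.univ := by
        apply Set.eq_univ_of_univ_subset
        exact Set.subset_iUnion (fun o : Option (Fin n) => (o.elim Set.univ U : Set (Euc d))) none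
      rw [this]; exact convex_univ
    · ext σ
      constructor
      · rintro ⟨-, x, hx⟩
        refine ⟨σ.eraseNone, ?_, ?_⟩
        · rw [← hnerve]
          exact ⟨hne, x, fun j hj => hx (some j) (Finset.mem_eraseNone.mp hj)⟩
        · by_cases hn : none ∈ σ
          · right
            ext o
            cases o with
            | none => simp [hn]
            | some a => simp [Finset.mem_eraseNone]
          · left
            ext o
            cases o with
            | none => simpa using hn
            | some a => simp [Finset.mem_eraseNone]
      · rintro ⟨τ, hτ, hστ⟩
        rw [← hnerve] at hτ
        obtain ⟨-, x, hx⟩ := hτ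
        refine ⟨⟨none, Set.univ_nonempty⟩, x, ?_⟩
        rintro (_ | i) hi
        · exact Set.mem_univ x
        · rcases hστ with h | h <;> subst h
          · simp only [Finset.mem_image, Option.some.injEq] at hi
            obtain ⟨j, hj, rfl⟩ := hi
            exact hx j hj
          · simp only [Finset.mem_insert, Finset.mem_image, Option.some.injEq] at hi
            rcases hi with h | ⟨j, hj, rfl⟩
            · exact absurd h (by simp)
            · exact hx j hj
  · -- Δ is empty; represent by all-empty sets
    have hΔempty : Δ = ∅ := by
      rw [← hnerve]
      ext σ
      simp only [nerveOf, Set.mem_setOf_eq, Set.mem_empty_iff_false, iff_false]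
      rintro ⟨h, -⟩
      exact hne h
    refine ⟨fun _ => ∅, fun _ => convex_empty, fun _ => isOpen_empty, ?_, ?_⟩
    · simpa using convex_empty
    · ext σ
      simp only [nerveOf, Set.mem_setOf_eq, coneCplx, hΔempty]
      simp
end

section
/- Let Δ = {∅, {p}} be the complex consisting of a single point, and let Σ^k Δ denote the k-fold suspension of Δ. Then for all k ≥ 0, the complex Σ^k Δ is k-convex union representable but not (k−1)-convex union representable. -/
open Set

/-- Ground set for the `k`-fold suspension of a point. -/
def GroundT : ℕ → Type
  | 0 => Unit
  | k + 1 => GroundT k ⊕ Fin 2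

instance instDecEqGroundT : (k : ℕ) → DecidableEq (GroundT k)
  | 0 => inferInstanceAs (DecidableEq Unit)
  | k + 1 =>
    haveI := instDecEqGroundT k
    inferInstanceAs (DecidableEq (GroundT k ⊕ Fin 2))

/-- The `k`-fold suspension `Σ^k Δ` of the complex `Δ = {∅, {p}}`
consisting of a single point. -/
def suspIterPoint : (k : ℕ) → Set (Finset (GroundT k))
  | 0 => {σ : Finset Unit | σ ⊆ {()}}
  | k + 1 => suspension (suspIterPoint k)

/-!
Upper bound: if convex open sets covering `ℝ^d` have nerve `Δ`, then their cylinders in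
`ℝ × ℝ^d`, together with the half-spaces `{t < 0}` and `{t > 0}`, cover `ℝ^(d+1)` and have nerve
`ΣΔ`; start from the single set `ℝ^0`.

Lower bound: `Σ^k` of a point has `k` pairs of vertices such that no face contains a pair, but
every choice of one vertex per pair is a face. In a representation in `ℝ^(k-1)` the two sets of
a pair are disjoint, hence separated by a hyperplane `f i = c i`, and the `k` functionals satisfy
a relation `∑ l i • f i = 0` with `l ≠ 0`. The function `∑ l i * (f i x - c i)` is then the
constant `-∑ l i * c i`, yet it is negative at a point lying on the side `f i < c i` exactly where
`l i > 0`, and nonnegative at a point lying on that side exactly where `l i < 0`.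
-/
theorem mem_suspension_iff {V : Type*} [DecidableEq V] {Δ : Set (Finset V)}
    {σ : Finset (V ⊕ Fin 2)} : σ ∈ suspension Δ ↔ σ.toLeft ∈ Δ ∧ σ.toRight.card ≤ 1 := by
  constructor
  · rintro ⟨τ, hτ, s, hs, rfl⟩
    have hl : (τ.image Sum.inl ∪ s.image Sum.inr).toLeft = τ := by ext; simp
    have hr : (τ.image Sum.inl ∪ s.image Sum.inr).toRight = s := by ext; simp
    rw [hl, hr]
    exact ⟨hτ, hs⟩
  · rintro ⟨hl, hr⟩
    exact ⟨σ.toLeft, hl, σ.toRight, hr, by ext (v | e) <;> simp⟩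

theorem Finset.card_le_one_iff_not_zero_mem_and_one_mem {s : Finset (Fin 2)} :
    s.card ≤ 1 ↔ ¬ (0 ∈ s ∧ 1 ∈ s) := by
  revert s
  decide

theorem card_le_finrank_of_separated_transversals {ι E : Type*} [Fintype ι]
    [NormedAddCommGroup E] [NormedSpace ℝ E] [FiniteDimensional ℝ E]
    (S : ι → Fin 2 → Set E) (hconv : ∀ i e, Convex ℝ (S i e)) (hopen : ∀ i, IsOpen (S i 0))
    (hdisj : ∀ i, Disjoint (S i 0) (S i 1))
    (htrans : ∀ ε : ι → Fin 2, ∃ x, ∀ i, x ∈ S i (ε i)) :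
    Fintype.card ι ≤ Module.finrank ℝ E := by
  choose f c hlt hge using fun i ↦
    geometric_hahn_banach_open (hconv i 0) (hopen i) (hconv i 1) (hdisj i)
  by_contra! hcard
  have hdep : ¬ LinearIndependent ℝ (fun i ↦ (f i : Module.Dual ℝ E)) := fun hli ↦ by
    have := hli.fintype_card_le_finrank
    rw [Subspace.dual_finrank_eq] at this
    omega
  obtain ⟨l, hl, i₀, hi₀⟩ := Fintype.not_linearIndependent_iff.1 hdep
  wlog hpos : 0 < l i₀ generalizing l
  · exact this (-l) (by simp [hl]) (neg_ne_zero.2 hi₀)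
      (neg_pos.2 (lt_of_le_of_ne (not_lt.1 hpos) hi₀))
  have hzero : ∀ x, ∑ i, l i * f i x = 0 := fun x ↦ by
    simpa using LinearMap.congr_fun hl x
  obtain ⟨x₁, hx₁⟩ := htrans fun i ↦ if 0 < l i then 0 else 1
  obtain ⟨x₂, hx₂⟩ := htrans fun i ↦ if l i < 0 then 0 else 1
  have h₁ : ∀ i, l i * f i x₁ ≤ l i * c i := fun i ↦ by
    by_cases h : 0 < l i
    · have := hlt i _ (by simpa [h] using hx₁ i)
      nlinarith
    · have := hge i _ (by simpa [h] using hx₁ i)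
      nlinarith
  have h₁₀ : l i₀ * f i₀ x₁ < l i₀ * c i₀ :=
    mul_lt_mul_of_pos_left (hlt i₀ _ (by simpa [hpos] using hx₁ i₀)) hpos
  have h₂ : ∀ i, l i * c i ≤ l i * f i x₂ := fun i ↦ by
    by_cases h : l i < 0
    · have := hlt i _ (by simpa [h] using hx₂ i)
      nlinarith
    · have := hge i _ (by simpa [h] using hx₂ i)
      nlinarith
  have hlt₁ : ∑ i, l i * f i x₁ < ∑ i, l i * c i :=
    Finset.sum_lt_sum (fun i _ ↦ h₁ i) ⟨i₀, Finset.mem_univ _, h₁₀⟩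
  have hle₂ : ∑ i, l i * c i ≤ ∑ i, l i * f i x₂ := Finset.sum_le_sum fun i _ ↦ h₂ i
  linarith [hzero x₁, hzero x₂]

/-- `Δ` contains the vertex pattern of the boundary of the `k`-dimensional cross-polytope. -/
def HasCrossPairs {V : Type*} (Δ : Set (Finset V)) (k : ℕ) : Prop :=
  ∃ p : Fin k → Fin 2 → V, (∀ i, ∀ σ ∈ Δ, ¬ (p i 0 ∈ σ ∧ p i 1 ∈ σ)) ∧
    ∀ ε : Fin k → Fin 2, ∃ σ ∈ Δ, ∀ i, p i (ε i) ∈ σ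

theorem HasCrossPairs.suspension {V : Type*} [DecidableEq V] {Δ : Set (Finset V)} {k : ℕ}
    (h : HasCrossPairs Δ k) : HasCrossPairs (suspension Δ) (k + 1) := by
  obtain ⟨p, hpair, htrans⟩ := h
  refine ⟨Fin.cons (fun e ↦ Sum.inr e) fun i e ↦ Sum.inl (p i e), ?_, fun ε ↦ ?_⟩
  · intro i σ hσ
    rw [mem_suspension_iff, Finset.card_le_one_iff_not_zero_mem_and_one_mem] at hσ
    cases i using Fin.cases with
    | zero => simpa using hσ.2
    | succ i => simpa using hpair i _ hσ.1
  · obtain ⟨τ, hτ, hετ⟩ := htrans (Fin.tail ε)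
    refine ⟨τ.disjSum {ε 0}, by simpa [mem_suspension_iff] using hτ, fun i ↦ ?_⟩
    cases i using Fin.cases with
    | zero => simp
    | succ i => simpa [Fin.tail] using hετ i

theorem hasCrossPairs_suspIterPoint : ∀ k, HasCrossPairs (suspIterPoint k) k
  | 0 => ⟨finZeroElim, finZeroElim, fun _ ↦ ⟨∅, Finset.empty_subset _, finZeroElim⟩⟩
  | k + 1 => (hasCrossPairs_suspIterPoint k).suspension

theorem HasCrossPairs.le_finrank_of_nerveOf {V E : Type*} [NormedAddCommGroup E]
    [NormedSpace ℝ E] [FiniteDimensional ℝ E] {U : V → Set E} {k : ℕ}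
    (hconv : ∀ i, Convex ℝ (U i)) (hopen : ∀ i, IsOpen (U i)) (h : HasCrossPairs (nerveOf U) k) :
    k ≤ Module.finrank ℝ E := by
  classical
  obtain ⟨p, hpair, htrans⟩ := h
  have hdisj : ∀ i, Disjoint (U (p i 0)) (U (p i 1)) := fun i ↦
    disjoint_left.2 fun x h₀ h₁ ↦
      hpair i {p i 0, p i 1} ⟨⟨_, x, h₀⟩, x, by simp [h₀, h₁]⟩ (by simp)
  have hmeet : ∀ ε : Fin k → Fin 2, ∃ x, ∀ i, x ∈ U (p i (ε i)) := fun ε ↦ by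
    obtain ⟨σ, ⟨-, x, hx⟩, hεσ⟩ := htrans ε
    exact ⟨x, fun i ↦ hx _ (hεσ i)⟩
  simpa only [Fintype.card_fin] using
    card_le_finrank_of_separated_transversals (fun i e ↦ U (p i e)) (fun _ _ ↦ hconv _)
      (fun _ ↦ hopen _) hdisj hmeet

theorem nerveOf_preimage {V E F : Type*} {g : F → E} (hg : Function.Surjective g)
    (U : V → Set E) : nerveOf (fun i ↦ g ⁻¹' U i) = nerveOf U := by
  ext σ
  simp only [nerveOf, mem_ofPred_eq, mem_preimage, hg.nonempty_preimage, hg.exists]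

def suspFamily {V E : Type*} (U : V → Set E) : V ⊕ Fin 2 → Set (ℝ × E) :=
  Sum.elim (fun v ↦ Prod.snd ⁻¹' U v) fun e ↦ Prod.fst ⁻¹' ![Iio 0, Ioi 0] e

section suspFamily

variable {V E : Type*} {U : V → Set E}

theorem iUnion_suspFamily (hcover : ⋃ i, U i = univ) : ⋃ i, suspFamily U i = univ :=
  eq_univ_of_forall fun x ↦ by
    obtain ⟨v, hv⟩ := mem_iUnion.1 (hcover ▸ mem_univ x.2)
    exact mem_iUnion.2 ⟨.inl v, hv⟩

theorem convex_suspFamily [AddCommGroup E] [Module ℝ E] (hconv : ∀ i, Convex ℝ (U i)) :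
    ∀ i, Convex ℝ (suspFamily U i)
  | .inl v => (hconv v).linear_preimage (LinearMap.snd ℝ ℝ E)
  | .inr e => by
    fin_cases e
    exacts [(convex_Iio 0).linear_preimage (LinearMap.fst ℝ ℝ E),
      (convex_Ioi 0).linear_preimage (LinearMap.fst ℝ ℝ E)]

theorem isOpen_suspFamily [TopologicalSpace E] (hopen : ∀ i, IsOpen (U i)) :
    ∀ i, IsOpen (suspFamily U i)
  | .inl v => (hopen v).preimage continuous_snd
  | .inr e => by
    fin_cases e
    exacts [isOpen_Iio.preimage continuous_fst, isOpen_Ioi.preimage continuous_fst]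

theorem nerveOf_suspFamily [DecidableEq V] (hcover : ⋃ i, U i = univ) :
    nerveOf (suspFamily U) = suspension (nerveOf U) := by
  ext σ
  rw [mem_suspension_iff, Finset.card_le_one_iff_not_zero_mem_and_one_mem]
  constructor
  · rintro ⟨-, x, hx⟩
    obtain ⟨v, hv⟩ := mem_iUnion.1 (hcover ▸ mem_univ x.2)
    refine ⟨⟨⟨v, x.2, hv⟩, x.2, fun v hv ↦ hx (.inl v) (Finset.mem_toLeft.1 hv)⟩, ?_⟩
    rintro ⟨h₀, h₁⟩
    have hneg : x.1 < 0 := hx (.inr 0) (Finset.mem_toRight.1 h₀)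
    have hpos : 0 < x.1 := hx (.inr 1) (Finset.mem_toRight.1 h₁)
    exact hneg.not_gt hpos
  · rintro ⟨⟨-, x, hx⟩, hsep⟩
    let t : ℝ := if 0 ∈ σ.toRight then -1 else 1
    refine ⟨⟨.inr 1, (1, x), by simp [suspFamily]⟩, (t, x), ?_⟩
    rintro (v | e) hv
    · exact hx v (Finset.mem_toLeft.2 hv)
    · rw [← Finset.mem_toRight] at hv
      match e, hv with
      | 0, h₀ => simp [suspFamily, t, h₀]
      | 1, h₁ =>
        have : 0 ∉ σ.toRight := fun h₀ ↦ hsep ⟨h₀, h₁⟩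
        simp [suspFamily, t, this]

end suspFamily

noncomputable def euclideanSuccEquiv (d : ℕ) : Euc (d + 1) ≃L[ℝ] ℝ × Euc d :=
  (EuclideanSpace.equiv (Fin (d + 1)) ℝ).trans <|
    (Fin.consEquivL ℝ fun _ ↦ ℝ).symm.trans <|
      (ContinuousLinearEquiv.refl ℝ ℝ).prodCongr (EuclideanSpace.equiv (Fin d) ℝ).symm

theorem IsCURep.exists_suspension {V : Type*} [DecidableEq V] {d : ℕ} {U : V → Set (Euc d)}
    {Δ : Set (Finset V)} (hU : IsCURep U Δ) (hcover : ⋃ i, U i = univ) :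
    ∃ U' : V ⊕ Fin 2 → Set (Euc (d + 1)), IsCURep U' (suspension Δ) ∧ ⋃ i, U' i = univ := by
  obtain ⟨hconv, hopen, -, hnerve⟩ := hU
  let e := euclideanSuccEquiv d
  have hcover' : ⋃ i, e ⁻¹' suspFamily U i = univ := by
    rw [← preimage_iUnion, iUnion_suspFamily hcover, preimage_univ]
  refine ⟨fun i ↦ e ⁻¹' suspFamily U i,
    ⟨fun i ↦ (convex_suspFamily hconv i).linear_preimage (e : Euc (d + 1) →ₗ[ℝ] ℝ × Euc d),
      fun i ↦ (isOpen_suspFamily hopen i).preimage e.continuous, hcover' ▸ convex_univ, ?_⟩,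
    hcover'⟩
  rw [nerveOf_preimage e.surjective, nerveOf_suspFamily hcover, hnerve]

theorem exists_isCURep_suspIterPoint :
    ∀ k, ∃ U : GroundT k → Set (Euc k), IsCURep U (suspIterPoint k) ∧ ⋃ i, U i = univ
  | 0 => by
    have hcover : ⋃ _ : GroundT 0, (univ : Set (Euc 0)) = univ :=
      eq_univ_of_forall fun _ ↦ mem_iUnion.2 ⟨(), trivial⟩
    refine ⟨fun _ ↦ univ,
      ⟨fun _ ↦ convex_univ, fun _ ↦ isOpen_univ, by rw [hcover]; exact convex_univ, ?_⟩, hcover⟩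
    ext σ
    exact ⟨fun _ _ _ ↦ Finset.mem_singleton.2 rfl, fun _ ↦ ⟨⟨(), 0, trivial⟩, 0, fun _ _ ↦ trivial⟩⟩
  | k + 1 =>
    let ⟨_, hU, hcover⟩ := exists_isCURep_suspIterPoint k
    hU.exists_suspension hcover

/-- **Corollary.** For all `k ≥ 0`, the `k`-fold suspension of a point is
`k`-convex union representable but not `(k-1)`-convex union representable. -/
theorem suspIterPoint_CUR (k : ℕ) :
    IsCUR k (suspIterPoint k) ∧
      ∀ j : ℕ, k = j + 1 → ¬ IsCUR j (suspIterPoint k) := by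
  refine ⟨(exists_isCURep_suspIterPoint k).imp fun _ ↦ And.left, ?_⟩
  rintro j rfl ⟨U, hconv, hopen, -, hnerve⟩
  have := (hnerve ▸ hasCrossPairs_suspIterPoint (j + 1)).le_finrank_of_nerveOf hconv hopen
  rw [finrank_euclideanSpace_fin] at this
  omega
end

section
/- Let C ⊆ 2^{[n]} be a neural code. If C is convex, then C is locally perfect. More precisely, if C has a convex realization by convex open sets in ℝ^d, then for every σ ∈ Δ(C) ∖ C, the link link_{Δ(C)}(σ) is d-convex union representable. -/
open Set

/-- The code of a collection `U` of sets in `ℝ^d`: the set of `σ ⊆ [n]` such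
that `U_σ ∖ ⋃_{j ∉ σ} U_j ≠ ∅`, where `U_σ = ⋂_{i ∈ σ} U_i` for `σ ≠ ∅` and
`U_∅ = conv (⋃ i, U i)`. -/
def codeOf {n d : ℕ} (U : Fin n → Set (Euc d)) : Set (Finset (Fin n)) :=
  {σ | ((if σ = (∅ : Finset (Fin n)) then convexHull ℝ (⋃ i, U i) else ⋂ i ∈ σ, U i) \
      ⋃ j ∈ {j : Fin n | j ∉ σ}, U j).Nonempty}

/-- `Δ(C)`: the smallest simplicial complex containing the code `C`. -/
def codeCplx {n : ℕ} (C : Set (Finset (Fin n))) : Set (Finset (Fin n)) :=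
  {τ | ∃ σ ∈ C, τ ⊆ σ}

/-- The link of `σ` in `Δ(C)`. -/
def linkOf {n : ℕ} (C : Set (Finset (Fin n))) (σ : Finset (Fin n)) :
    Set (Finset (Fin n)) :=
  {τ | τ ∩ σ = ∅ ∧ τ ∪ σ ∈ codeCplx C}

/-- **Proposition.** A convex neural code is locally perfect: if `C` has a
realization by convex open sets in `ℝ^d`, then for every `σ ∈ Δ(C) ∖ C` the
link of `σ` in `Δ(C)` is `d`-convex union representable (in particular, it is
convex union representable, so `C` has no nerve obstructions). -/
theorem convex_code_locally_perfect {n d : ℕ} (C : Set (Finset (Fin n)))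
    (U : Fin n → Set (Euc d)) (hconv : ∀ i, Convex ℝ (U i))
    (hopen : ∀ i, IsOpen (U i)) (hcode : codeOf U = C) :
    ∀ σ : Finset (Fin n), σ ∈ codeCplx C → σ ∉ C →
      IsCUR d (linkOf C σ) ∧ ConvexUnionRepresentable (linkOf C σ) := by
  classical
  intro σ hσΔ hσC
  -- the codeword of a point
  have hcw : ∀ (x : Euc d) (i₀ : Fin n), x ∈ U i₀ →
      (Finset.univ.filter (fun i => x ∈ U i)) ∈ C := by
    intro x i₀ hx
    rw [← hcode]
    have hne : (Finset.univ.filter (fun i => x ∈ U i)) ≠ ∅ := by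
      intro h
      have : i₀ ∈ Finset.univ.filter (fun i => x ∈ U i) := by simp [hx]
      simp [h] at this
    refine ⟨x, ?_, ?_⟩
    · rw [if_neg hne]
      simp only [Set.mem_iInter]
      intro i hi
      exact (Finset.mem_filter.mp hi).2
    · simp only [Set.mem_iUnion, Set.mem_setOf_eq, not_exists]
      intro j hj hxj
      exact hj (Finset.mem_filter.mpr ⟨Finset.mem_univ j, hxj⟩)
  set A : Set (Euc d) := ⋂ i ∈ σ, U i with hAdef
  have hmemA : ∀ x : Euc d, x ∈ A ↔ ∀ i ∈ σ, x ∈ U i := by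
    intro x; simp [hAdef]
  set V : Fin n → Set (Euc d) := fun i => if i ∈ σ then ∅ else U i ∩ A with hVdef
  have hAconv : Convex ℝ A := by
    exact convex_iInter fun i => convex_iInter fun _ => hconv i
  have hVconv : ∀ i, Convex ℝ (V i) := by
    intro i
    simp only [hVdef]
    split
    · exact convex_empty
    · exact (hconv i).inter hAconv
  have hAopen : IsOpen A := isOpen_biInter_finset fun i _ => hopen i
  have hVopen : ∀ i, IsOpen (V i) := by
    intro i
    simp only [hVdef]
    split
    · exact isOpen_empty
    · exact (hopen i).inter hAopen
  -- σ ∉ C unpacked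
  have hσC' : ((if σ = (∅ : Finset (Fin n)) then convexHull ℝ (⋃ i, U i) else ⋂ i ∈ σ, U i)
      ⊆ ⋃ j ∈ {j : Fin n | j ∉ σ}, U j) := by
    rw [← hcode] at hσC
    have := (Set.not_nonempty_iff_eq_empty.mp hσC)
    exact Set.diff_eq_empty.mp this
  -- the union of the V i is convex
  have hUnionConv : Convex ℝ (⋃ i, V i) := by
    by_cases hσe : σ = ∅
    · have hA : A = Set.univ := by
        rw [hAdef, hσe]; simp
      have hVU : (⋃ i, V i) = ⋃ i, U i := by
        subst hσe
        simp [hVdef, hA]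
      rw [hVU]
      have hsub : convexHull ℝ (⋃ i, U i) ⊆ ⋃ i, U i := by
        rw [if_pos hσe] at hσC'
        refine hσC'.trans ?_
        intro x hx
        simp only [Set.mem_iUnion, Set.mem_setOf_eq] at hx ⊢
        obtain ⟨j, _, hj⟩ := hx
        exact ⟨j, hj⟩
      have heq : convexHull ℝ (⋃ i, U i) = ⋃ i, U i :=
        le_antisymm hsub (subset_convexHull ℝ _)
      rw [← heq]
      exact convex_convexHull ℝ _
    · have hVA : (⋃ i, V i) = A := by
        apply le_antisymm
        · intro x hx
          simp only [Set.mem_iUnion, hVdef] at hx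
          obtain ⟨i, hi⟩ := hx
          by_cases h : i ∈ σ
          · simp [h] at hi
          · rw [if_neg h] at hi
            exact hi.2
        · intro x hx
          rw [if_neg hσe] at hσC'
          have hx2 : x ∈ ⋃ j ∈ {j : Fin n | j ∉ σ}, U j := hσC' hx
          simp only [Set.mem_iUnion, Set.mem_setOf_eq] at hx2
          obtain ⟨j, hjσ, hjx⟩ := hx2
          simp only [Set.mem_iUnion, hVdef]
          exact ⟨j, by rw [if_neg hjσ]; exact ⟨hjx, hx⟩⟩
      rw [hVA]
      exact hAconv
  -- the nerve of V is the link of σ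
  have hnerve : nerveOf V = linkOf C σ := by
    ext τ
    constructor
    · rintro ⟨⟨j, y, hy⟩, x, hx⟩
      have hVmem : ∀ i, y ∈ V i → i ∉ σ ∧ y ∈ U i ∧ y ∈ A := by
        intro i hi
        simp only [hVdef] at hi
        by_cases h : i ∈ σ
        · simp [h] at hi
        · rw [if_neg h] at hi
          exact ⟨h, hi.1, hi.2⟩
      have hxmem : ∀ i ∈ τ, i ∉ σ ∧ x ∈ U i ∧ x ∈ A := by
        intro i hi
        have := hx i hi
        simp only [hVdef] at this
        by_cases h : i ∈ σ
        · simp [h] at this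
        · rw [if_neg h] at this
          exact ⟨h, this.1, this.2⟩
      refine ⟨?_, ?_⟩
      · apply Finset.eq_empty_of_forall_notMem
        intro i hi
        rw [Finset.mem_inter] at hi
        exact (hxmem i hi.1).1 hi.2
      · by_cases hτe : τ = ∅
        · rw [hτe, Finset.empty_union]
          exact hσΔ
        · obtain ⟨i₁, hi₁⟩ := Finset.nonempty_iff_ne_empty.mpr hτe
          obtain ⟨_, hxU, hxA⟩ := hxmem i₁ hi₁
          refine ⟨Finset.univ.filter (fun i => x ∈ U i), hcw x i₁ hxU, ?_⟩
          intro i hi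
          rw [Finset.mem_union] at hi
          rcases hi with hi | hi
          · exact Finset.mem_filter.mpr ⟨Finset.mem_univ i, (hxmem i hi).2.1⟩
          · exact Finset.mem_filter.mpr ⟨Finset.mem_univ i, (hmemA x).mp hxA i hi⟩
    · rintro ⟨hdisj, ρ, hρC, hsubρ⟩
      by_cases hρe : ρ = ∅
      · -- then τ = σ = ∅
        have hτe : τ = ∅ := Finset.subset_empty.mp (hρe ▸ (Finset.subset_union_left.trans hsubρ))
        have hσe : σ = ∅ := Finset.subset_empty.mp (hρe ▸ (Finset.subset_union_right.trans hsubρ))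
        rw [← hcode] at hρC
        obtain ⟨x, hx, -⟩ := hρC
        rw [hρe, if_pos rfl] at hx
        have hUne : (⋃ i, U i).Nonempty := by
          rcases convexHull_nonempty_iff.mp ⟨x, hx⟩ with ⟨y, hy⟩
          exact ⟨y, hy⟩
        obtain ⟨y, hy⟩ := hUne
        simp only [Set.mem_iUnion] at hy
        obtain ⟨i₀, hi₀⟩ := hy
        refine ⟨⟨i₀, y, ?_⟩, x, ?_⟩
        · simp only [hVdef, hσe]
          simp only [Finset.notMem_empty, if_false]
          refine ⟨hi₀, ?_⟩
          rw [hmemA]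
          simp [hσe]
        · intro i hi
          rw [hτe] at hi
          simp at hi
      · have hρσ : ρ ≠ σ := fun h => hσC (h ▸ hρC)
        rw [← hcode] at hρC
        obtain ⟨x, hx1, -⟩ := hρC
        rw [if_neg hρe] at hx1
        simp only [Set.mem_iInter] at hx1
        have hx1' : ∀ i ∈ ρ, x ∈ U i := fun i hi => by
          have := hx1 i
          exact hx1 i hi
        have hxA : x ∈ A := (hmemA x).mpr fun i hi => hx1' i (hsubρ (Finset.mem_union_right τ hi))
        have hσρ : σ ⊆ ρ := Finset.subset_union_right.trans hsubρ
        obtain ⟨j, hjρ, hjσ⟩ : ∃ j ∈ ρ, j ∉ σ := by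
          by_contra h
          push_neg at h
          exact hρσ (Finset.Subset.antisymm h hσρ)
        refine ⟨⟨j, x, ?_⟩, x, ?_⟩
        · simp only [hVdef, if_neg hjσ]
          exact ⟨hx1' j hjρ, hxA⟩
        · intro i hi
          have hiσ : i ∉ σ := fun h =>
            (Finset.eq_empty_iff_forall_notMem.mp hdisj i) (Finset.mem_inter.mpr ⟨hi, h⟩)
          simp only [hVdef, if_neg hiσ]
          exact ⟨hx1' i (hsubρ (Finset.mem_union_left σ hi)), hxA⟩
  exact ⟨⟨V, hVconv, hVopen, hUnionConv, hnerve⟩, d, V, hVconv, hVopen, hUnionConv, hnerve⟩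
end
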